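/- Let X and Y be Banach spaces. Then every integral projective norm-attaining tensor can be approximated in the projective norm by finitely norm-attaining tensors; that is, INA_π(X⊗̂_πY) ⊆ closure of FNA_π(X⊗̂_πY) in X⊗̂_πY. -/

import Mathlib

/-! Let `u = ∫ x ⊗ y dμ` with `‖μ‖ = ‖u‖_π`, and let `g` be a real norming functional for `u`.
Since `g (x ⊗ y) ≤ 1` on `B_X × B_Y` while `∫ g (x ⊗ y) dμ = g u = ‖μ‖`, we get `g (x ⊗ y) = 1`
for `μ`-almost every `(x, y)`. Hence `u / ‖μ‖` lies in the closed convex hull of the elementary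
tensors on which `g` attains the value `1 = ‖x‖‖y‖`, and every nonnegative multiple of a convex
combination of such tensors is finitely norm-attaining: `g` certifies that the triangle inequality
for the obvious representation is an equality. -/

open MeasureTheory Metric Set Filter TopologicalSpace

noncomputable section

variable {𝕜 : Type*} [RCLike 𝕜]
variable {X : Type*} [NormedAddCommGroup X] [NormedSpace 𝕜 X]
variable {Y : Type*} [NormedAddCommGroup Y] [NormedSpace 𝕜 Y]
variable {T : Type*} [NormedAddCommGroup T] [NormedSpace 𝕜 T]
variable [NormedSpace ℝ T] [IsScalarTower ℝ 𝕜 T]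

/-- `T`, together with the continuous bilinear map `tmul`, is a realization of the
projective tensor product `X ⊗̂_π Y`: it is complete, the span of elementary tensors
`x ⊗ y = tmul x y` is dense, and on that span the norm is the projective norm. -/
structure IsProjTensor (tmul : X →L[𝕜] Y →L[𝕜] T) : Prop where
  complete : CompleteSpace T
  dense_span :
    Dense ((Submodule.span 𝕜 (Set.range fun p : X × Y => tmul p.1 p.2) : Submodule 𝕜 T) : Set T)
  norm_eq : ∀ z : T,
    z ∈ Submodule.span 𝕜 (Set.range fun p : X × Y => tmul p.1 p.2) →
    ‖z‖ = sInf { c : ℝ | ∃ (m : ℕ) (x : Fin m → X) (y : Fin m → Y),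
      z = ∑ i, tmul (x i) (y i) ∧ c = ∑ i, ‖x i‖ * ‖y i‖ }

/-- `u` attains its projective norm (`u ∈ NA_π(X ⊗̂_π Y)`): it admits a representation
`u = ∑ λ_n x_n ⊗ y_n` with `x_n ∈ B_X`, `y_n ∈ B_Y`, `λ_n ≥ 0` and `∑ λ_n = ‖u‖_π`. -/
def NApi (tmul : X →L[𝕜] Y →L[𝕜] T) (u : T) : Prop :=
  ∃ (x : ℕ → X) (y : ℕ → Y) (l : ℕ → ℝ),
    (∀ n, ‖x n‖ ≤ 1) ∧ (∀ n, ‖y n‖ ≤ 1) ∧ (∀ n, 0 ≤ l n) ∧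
    HasSum (fun n => (l n : 𝕜) • tmul (x n) (y n)) u ∧ HasSum l ‖u‖

/-- `u` is finitely norm-attaining (`u ∈ FNA_π(X ⊗̂_π Y)`): it admits a finite optimal
representation `u = ∑_{k<m} x_k ⊗ y_k` with `∑_{k<m} ‖x_k‖‖y_k‖ = ‖u‖_π`. -/
def FNApi (tmul : X →L[𝕜] Y →L[𝕜] T) (u : T) : Prop :=
  ∃ (m : ℕ) (x : Fin m → X) (y : Fin m → Y),
    u = ∑ i, tmul (x i) (y i) ∧ ∑ i, ‖x i‖ * ‖y i‖ = ‖u‖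

/-- `u` is an integral projective norm-attaining tensor witnessed by `μ`: `μ` is a finite
positive Borel measure concentrated on `B_X × B_Y`, the map `(x, y) ↦ x ⊗ y` is
`μ`-Bochner integrable, `u = ∫ x ⊗ y ∂μ` and `‖μ‖ = ‖u‖_π`. -/
def INApiWitness [MeasurableSpace X] [MeasurableSpace Y]
    (tmul : X →L[𝕜] Y →L[𝕜] T) (u : T) (μ : Measure (X × Y)) : Prop :=
  IsFiniteMeasure μ ∧
  μ ((closedBall (0 : X) 1 ×ˢ closedBall (0 : Y) 1)ᶜ) = 0 ∧
  Integrable (fun p : X × Y => tmul p.1 p.2) μ ∧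
  u = ∫ p, tmul p.1 p.2 ∂μ ∧
  (μ Set.univ).toReal = ‖u‖

/-- `u ∈ INA_π(X ⊗̂_π Y)`: `u` is an integral projective norm-attaining tensor. -/
def INApi [MeasurableSpace X] [MeasurableSpace Y]
    (tmul : X →L[𝕜] Y →L[𝕜] T) (u : T) : Prop :=
  ∃ μ : Measure (X × Y), INApiWitness tmul u μ

variable {tmul : X →L[𝕜] Y →L[𝕜] T}

omit [NormedSpace ℝ T] [IsScalarTower ℝ 𝕜 T] in
lemma IsProjTensor.norm_tmul_le (hT : IsProjTensor tmul) (x : X) (y : Y) :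
    ‖tmul x y‖ ≤ ‖x‖ * ‖y‖ := by
  rw [hT.norm_eq _ (Submodule.subset_span ⟨(x, y), rfl⟩)]
  refine csInf_le ⟨0, ?_⟩ ⟨1, fun _ => x, fun _ => y, by simp, by simp⟩
  rintro c ⟨m, xs, ys, -, rfl⟩
  exact Finset.sum_nonneg fun i _ => mul_nonneg (norm_nonneg _) (norm_nonneg _)

omit [NormedSpace ℝ T] [IsScalarTower ℝ 𝕜 T] in
lemma fnapi_zero : FNApi tmul 0 :=
  ⟨0, Fin.elim0, Fin.elim0, by simp, by simp⟩

omit [NormedSpace ℝ T] [IsScalarTower ℝ 𝕜 T] in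
lemma FNApi.of_fintype {ι : Type*} [Fintype ι] (x : ι → X) (y : ι → Y)
    (h : ∑ i, ‖x i‖ * ‖y i‖ = ‖∑ i, tmul (x i) (y i)‖) :
    FNApi tmul (∑ i, tmul (x i) (y i)) := by
  let e := Fintype.equivFin ι
  refine ⟨Fintype.card ι, x ∘ e.symm, y ∘ e.symm, ?_, ?_⟩
  · exact (Fintype.sum_equiv e.symm _ _ fun _ => rfl).symm
  · rw [← h]
    exact Fintype.sum_equiv e.symm _ _ fun _ => rfl

lemma StrongDual.le_norm_of_norm_le_one {E : Type*} [SeminormedAddCommGroup E] [NormedSpace ℝ E]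
    {g : StrongDual ℝ E} (hg : ‖g‖ ≤ 1) (t : E) : g t ≤ ‖t‖ :=
  (le_abs_self _).trans <| (g.le_of_opNorm_le hg t).trans_eq (one_mul _)

omit [IsScalarTower ℝ 𝕜 T] in
lemma IsProjTensor.fnapi_sum_of_norming (hT : IsProjTensor tmul) {g : StrongDual ℝ T}
    (hg : ‖g‖ ≤ 1) {ι : Type*} [Fintype ι] (x : ι → X) (y : ι → Y)
    (hxy : ∀ i, g (tmul (x i) (y i)) = ‖x i‖ * ‖y i‖) :
    FNApi tmul (∑ i, tmul (x i) (y i)) := by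
  refine FNApi.of_fintype x y (le_antisymm ?_ ?_)
  · calc ∑ i, ‖x i‖ * ‖y i‖ = g (∑ i, tmul (x i) (y i)) := by simp only [map_sum, hxy]
      _ ≤ ‖∑ i, tmul (x i) (y i)‖ := StrongDual.le_norm_of_norm_le_one hg _
  · exact (norm_sum_le _ _).trans (Finset.sum_le_sum fun i _ => hT.norm_tmul_le _ _)

def normingPairs (tmul : X →L[𝕜] Y →L[𝕜] T) (g : StrongDual ℝ T) : Set (X × Y) :=
  {p | g (tmul p.1 p.2) = 1 ∧ ‖p.1‖ * ‖p.2‖ ≤ 1}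

lemma IsProjTensor.apply_tmul_smul_of_mem_normingPairs (hT : IsProjTensor tmul)
    {g : StrongDual ℝ T} (hg : ‖g‖ ≤ 1) {p : X × Y} (hp : p ∈ normingPairs tmul g) (c : ℝ)
    (hc : 0 ≤ c) :
    g (tmul ((c : 𝕜) • p.1) p.2) = ‖(c : 𝕜) • p.1‖ * ‖p.2‖ := by
  have hnorm : ‖p.1‖ * ‖p.2‖ = 1 := le_antisymm hp.2 <| hp.1 ▸
    (StrongDual.le_norm_of_norm_le_one hg _).trans (hT.norm_tmul_le _ _)
  rw [norm_smul, RCLike.norm_ofReal, abs_of_nonneg hc, mul_assoc, hnorm, map_smul,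
    smul_apply, ← RCLike.real_smul_eq_coe_smul, map_smul, hp.1, smul_eq_mul]

lemma IsProjTensor.fnapi_smul_of_mem_convexHull (hT : IsProjTensor tmul) {g : StrongDual ℝ T}
    (hg : ‖g‖ ≤ 1) {a : ℝ} (ha : 0 ≤ a) {v : T}
    (hv : v ∈ convexHull ℝ ((fun p : X × Y => tmul p.1 p.2) '' normingPairs tmul g)) :
    FNApi tmul (a • v) := by
  obtain ⟨ι, _, w, z, hw0, -, hz, rfl⟩ := mem_convexHull_iff_exists_fintype.1 hv
  choose p hp hpz using hz
  have hterm : ∀ i, (a * w i) • z i = tmul (((a * w i : ℝ) : 𝕜) • (p i).1) (p i).2 := by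
    intro i
    rw [map_smul, smul_apply, ← RCLike.real_smul_eq_coe_smul, ← hpz i]
  simp only [Finset.smul_sum, smul_smul, hterm]
  exact hT.fnapi_sum_of_norming hg _ _ fun i =>
    hT.apply_tmul_smul_of_mem_normingPairs hg (hp i) _ (mul_nonneg ha (hw0 i))

omit [IsScalarTower ℝ 𝕜 T] in
lemma IsProjTensor.ae_mem_normingPairs [MeasurableSpace X] [MeasurableSpace Y]
    (hT : IsProjTensor tmul) {u : T} {μ : Measure (X × Y)} (hμ : INApiWitness tmul u μ)
    {g : StrongDual ℝ T} (hg : ‖g‖ ≤ 1) (hgu : g u = ‖u‖) :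
    ∀ᵐ p ∂μ, p ∈ normingPairs tmul g := by
  have := hT.complete
  obtain ⟨hfin, hnull, hint, rfl, hnorm⟩ := hμ
  have hball : ∀ᵐ p ∂μ, ‖p.1‖ * ‖p.2‖ ≤ 1 := by
    filter_upwards [mem_ae_iff.2 hnull] with p ⟨h1, h2⟩
    exact mul_le_one₀ (mem_closedBall_zero_iff.1 h1) (norm_nonneg _) (mem_closedBall_zero_iff.1 h2)
  have hle : (fun p : X × Y => g (tmul p.1 p.2)) ≤ᵐ[μ] fun _ => 1 := by
    filter_upwards [hball] with p hp
    exact (StrongDual.le_norm_of_norm_le_one hg _).trans ((hT.norm_tmul_le _ _).trans hp)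
  have hint_eq : ∫ p, g (tmul p.1 p.2) ∂μ = ∫ _, (1 : ℝ) ∂μ := by
    rw [g.integral_comp_comm hint, hgu, integral_const, smul_eq_mul, mul_one, ← hnorm,
      measureReal_def]
  filter_upwards [(integral_eq_iff_of_ae_le (g.integrable_comp hint) (integrable_const _)
    hle).1 hint_eq, hball] with p h1 h2
  exact ⟨h1, h2⟩

theorem stmt_6_general [MeasurableSpace X] [MeasurableSpace Y]
    (tmul : X →L[𝕜] Y →L[𝕜] T) (hT : IsProjTensor tmul) :
    {u : T | INApi tmul u} ⊆ closure {u : T | FNApi tmul u} := by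
  have := hT.complete
  rintro u ⟨μ, hμ⟩
  obtain ⟨g, hg, hgu⟩ := exists_dual_vector'' ℝ u
  have hS := hT.ae_mem_normingPairs hμ hg hgu
  obtain ⟨hfin, -, hint, rfl, -⟩ := hμ
  rcases eq_or_ne μ 0 with rfl | hμ0
  · rw [integral_zero_measure]
    exact subset_closure fnapi_zero
  have : NeZero μ := ⟨hμ0⟩
  have havg : ⨍ p, tmul p.1 p.2 ∂μ ∈
      closure (convexHull ℝ ((fun p : X × Y => tmul p.1 p.2) '' normingPairs tmul g)) :=
    (convex_convexHull ℝ _).closure.average_mem isClosed_closure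
      (hS.mono fun p hp => subset_closure (subset_convexHull ℝ _ (mem_image_of_mem _ hp))) hint
  rw [← measure_smul_average]
  refine closure_mono ?_ (image_closure_subset_closure_image (continuous_const_smul _)
    (mem_image_of_mem _ havg))
  rintro - ⟨v, hv, rfl⟩
  exact hT.fnapi_smul_of_mem_convexHull hg measureReal_nonneg hv

/-- Theorem 2.10: every integral projective norm-attaining tensor is a norm limit of
finitely norm-attaining tensors. -/
theorem stmt_6 [CompleteSpace X] [CompleteSpace Y]
    [MeasurableSpace X] [BorelSpace X] [MeasurableSpace Y] [BorelSpace Y]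
    (tmul : X →L[𝕜] Y →L[𝕜] T) (hT : IsProjTensor tmul) :
    {u : T | INApi tmul u} ⊆ closure {u : T | FNApi tmul u} :=
  stmt_6_general tmul hT
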